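/- arXiv:2508.10845 — 2 statements merged into one kernel-verified Lean document; each statement's English description precedes it below -/
import Mathlib

section
/- Let X be a scheme and F a quasi-coherent O_X-module. If there exists a faithfully flat, quasi-compact morphism of schemes g : U → X such that g*F is a finite locally free O_U-module, then F is a finite locally free O_X-module. -/
open TensorProduct

section Aux

variable (R S : Type) [CommRing R] [CommRing S] [Algebra R S] [Module.FaithfullyFlat R S]

open LinearMap

/-- Faithfully flat base change reflects injectivity. -/
lemma ffd_injective_of_lTensor_injective {N N' : Type} [AddCommGroup N] [Module R N]
    [AddCommGroup N'] [Module R N'] (f : N →ₗ[R] N')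
    (hf : Function.Injective (lTensor S f)) : Function.Injective f := by
  rw [← LinearMap.ker_eq_bot]
  have h0 : (lTensor S f) ∘ₗ (lTensor S (LinearMap.ker f).subtype) = 0 := by
    rw [← lTensor_comp]
    have : f ∘ₗ (LinearMap.ker f).subtype = 0 := by ext x; exact x.2
    rw [this, lTensor_zero]
  have hsub : Function.Injective (lTensor S (LinearMap.ker f).subtype) :=
    Module.Flat.lTensor_preserves_injective_linearMap _ (Submodule.injective_subtype _)
  have hss : Subsingleton (S ⊗[R] (LinearMap.ker f)) := by
    refine subsingleton_of_forall_eq 0 (fun x => ?_)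
    apply hsub
    apply hf
    rw [map_zero, map_zero]
    exact congr($h0 x)
  have := Module.FaithfullyFlat.lTensor_reflects_triviality R S (LinearMap.ker f)
  exact Submodule.eq_bot_of_subsingleton

/-- Descent of module-finiteness along a faithfully flat ring map. -/
lemma ffd_finite (N : Type) [AddCommGroup N] [Module R N]
    [hfin : Module.Finite S (S ⊗[R] N)] : Module.Finite R N := by
  classical
  -- the image of `N` generates `S ⊗[R] N` over `S`
  have hspan : Submodule.span S (Set.range (fun n : N => (1 : S) ⊗ₜ[R] n)) = ⊤ := by
    rw [eq_top_iff]
    rintro x -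
    induction x with
    | zero => exact Submodule.zero_mem _
    | tmul s n =>
        have : s ⊗ₜ[R] n = s • ((1 : S) ⊗ₜ[R] n) := by simp [TensorProduct.smul_tmul']
        rw [this]
        exact Submodule.smul_mem _ _ (Submodule.subset_span ⟨n, rfl⟩)
    | add x y hx hy => exact Submodule.add_mem _ hx hy
  -- extract a finite generating subset of the image of `N`
  obtain ⟨T, hT⟩ := hfin.fg_top
  have key : ∀ t ∈ T, ∃ u : Finset (S ⊗[R] N),
      ↑u ⊆ Set.range (fun n : N => (1 : S) ⊗ₜ[R] n) ∧ t ∈ Submodule.span S (u : Set _) := by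
    intro t _
    exact Submodule.mem_span_finite_of_mem_span (by rw [hspan]; trivial)
  choose u hu1 hu2 using key
  set U : Finset (S ⊗[R] N) := T.attach.biUnion (fun t => u t t.2) with hU
  have hUsub : (U : Set (S ⊗[R] N)) ⊆ Set.range (fun n : N => (1 : S) ⊗ₜ[R] n) := by
    intro x hx
    simp only [hU, Finset.coe_biUnion, Set.mem_iUnion] at hx
    obtain ⟨t, _, hx⟩ := hx
    exact hu1 t t.2 hx
  have hUspan : Submodule.span S (U : Set (S ⊗[R] N)) = ⊤ := by
    rw [eq_top_iff, ← hT]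
    apply Submodule.span_le.2
    intro t ht
    refine Submodule.span_mono ?_ (hu2 t ht)
    intro x hx
    simp only [hU, Finset.coe_biUnion, Set.mem_iUnion]
    exact ⟨⟨t, ht⟩, Finset.mem_attach _ _, hx⟩
  -- choose preimages in `N`
  choose v hv using fun x : U => hUsub x.2
  -- the span of the preimages is everything
  set N₀ : Submodule R N := Submodule.span R (Set.range v) with hN₀
  have hmkQ0 : (N₀.mkQ.baseChange S) = 0 := by
    rw [← LinearMap.ker_eq_top, eq_top_iff, ← hUspan, Submodule.span_le]
    intro x hx
    have hn : (1 : S) ⊗ₜ[R] (v ⟨x, hx⟩) = x := hv (⟨x, hx⟩ : U)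
    have hn0 : N₀.mkQ (v ⟨x, hx⟩) = 0 := by
      rw [Submodule.mkQ_apply, Submodule.Quotient.mk_eq_zero]
      exact Submodule.subset_span ⟨⟨x, hx⟩, rfl⟩
    rw [SetLike.mem_coe, LinearMap.mem_ker, ← hn, LinearMap.baseChange_tmul, hn0,
      TensorProduct.tmul_zero]
  have hsurj : Function.Surjective (N₀.mkQ.baseChange S) := by
    have : ⇑(N₀.mkQ.baseChange S) = ⇑(lTensor S N₀.mkQ) := by
      rw [LinearMap.baseChange_eq_ltensor]
    rw [this]
    exact LinearMap.lTensor_surjective S N₀.mkQ_surjective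
  have hss : Subsingleton (S ⊗[R] (N ⧸ N₀)) := by
    refine subsingleton_of_forall_eq 0 (fun x => ?_)
    obtain ⟨y, rfl⟩ := hsurj x
    rw [hmkQ0]
    rfl
  have := Module.FaithfullyFlat.lTensor_reflects_triviality R S (N ⧸ N₀)
  have htop : N₀ = ⊤ := (Submodule.Quotient.subsingleton_iff).1 this
  refine ⟨?_⟩
  rw [← htop, hN₀]
  exact Submodule.fg_span (Set.finite_range v)

variable (M : Type) [AddCommGroup M] [Module R M]

/-- The base-change associativity equivalence used for flatness descent. -/
noncomputable def ffdEquiv (N : Type) [AddCommGroup N] [Module R N] :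
    S ⊗[R] (N ⊗[R] M) ≃ₗ[R] ((S ⊗[R] N) ⊗[S] (S ⊗[R] M)) :=
  (TensorProduct.assoc R S N M).symm.trans
    (((TensorProduct.AlgebraTensorModule.cancelBaseChange R S S (S ⊗[R] N) M).restrictScalars
      R).symm)

lemma ffdEquiv_naturality {N N' : Type} [AddCommGroup N] [Module R N]
    [AddCommGroup N'] [Module R N'] (f : N →ₗ[R] N') :
    (ffdEquiv R S M N').toLinearMap ∘ₗ lTensor S (rTensor M f) =
      ((rTensor (S ⊗[R] M) (f.baseChange S)).restrictScalars R) ∘ₗ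
        (ffdEquiv R S M N).toLinearMap := by
  ext s n m
  simp [ffdEquiv]

/-- Descent of flatness along a faithfully flat ring map. -/
lemma ffd_flat [Module.Flat S (S ⊗[R] M)] : Module.Flat R M := by
  rw [Module.Flat.iff_rTensor_injective']
  intro I
  apply ffd_injective_of_lTensor_injective R S
  have hnat := ffdEquiv_naturality R S M I.subtype
  have : lTensor S (rTensor M I.subtype) =
      (ffdEquiv R S M (R : Type)).symm.toLinearMap ∘ₗ
        (((rTensor (S ⊗[R] M) ((I.subtype).baseChange S)).restrictScalars R) ∘ₗ
          (ffdEquiv R S M I).toLinearMap) := by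
    rw [← hnat, ← LinearMap.comp_assoc]
    ext x
    simp
  rw [this]
  have hbc : Function.Injective ((I.subtype).baseChange S) := by
    have : ⇑((I.subtype).baseChange S) = ⇑(lTensor S I.subtype) := by
      rw [LinearMap.baseChange_eq_ltensor]
    rw [this]
    exact Module.Flat.lTensor_preserves_injective_linearMap _ (Submodule.injective_subtype _)
  have hmid : Function.Injective (rTensor (S ⊗[R] M) ((I.subtype).baseChange S)) :=
    Module.Flat.rTensor_preserves_injective_linearMap _ hbc
  exact (ffdEquiv R S M (R : Type)).symm.injective.comp
    (hmid.comp (ffdEquiv R S M I).injective)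

end Aux

/-- faithfully flat descent of finite local freeness. A quasi-coherent
module on an affine scheme `Spec R` is a module `M`, a faithfully flat quasi-compact
cover is given by a faithfully flat ring map `R → S`, and "finite locally free"
corresponds to "finitely generated and projective". If `S ⊗[R] M` is finite locally
free over `S`, then `M` is finite locally free over `R`. -/
theorem stmt_5 (R S M : Type) [CommRing R] [CommRing S] [Algebra R S]
    [Module.FaithfullyFlat R S] [AddCommGroup M] [Module R M]
    (h1 : Module.Finite S (S ⊗[R] M)) (h2 : Module.Projective S (S ⊗[R] M)) :
    Module.Finite R M ∧ Module.Projective R M := by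
  haveI := h1
  haveI := h2
  haveI : Module.Flat S (S ⊗[R] M) := Module.Flat.of_projective
  haveI hfin : Module.Finite R M := ffd_finite R S M
  haveI hflat : Module.Flat R M := ffd_flat R S M
  -- finite presentation of `M` over `R`
  obtain ⟨n, π, hπ⟩ := Module.Finite.exists_fin' R M
  haveI : Module.FinitePresentation S (S ⊗[R] M) :=
    Module.finitePresentation_of_projective S (S ⊗[R] M)
  have hπS : Function.Surjective (π.baseChange S) := by
    have : ⇑(π.baseChange S) = ⇑(LinearMap.lTensor S π) := by
      rw [LinearMap.baseChange_eq_ltensor]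
    rw [this]
    exact LinearMap.lTensor_surjective S hπ
  have hkerfg : (LinearMap.ker (π.baseChange S)).FG :=
    Module.FinitePresentation.fg_ker (π.baseChange S) hπS
  haveI : Module.Finite S (LinearMap.ker (π.baseChange S)) := by
    exact Module.Finite.iff_fg.mpr hkerfg
  -- `S ⊗ ker π ≃ ker (baseChange π)`
  set K := LinearMap.ker π with hK
  have hKsub : Function.Injective (K.subtype.baseChange S) := by
    have : ⇑(K.subtype.baseChange S) = ⇑(LinearMap.lTensor S K.subtype) := by
      rw [LinearMap.baseChange_eq_ltensor]
    rw [this]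
    exact Module.Flat.lTensor_preserves_injective_linearMap _ (Submodule.injective_subtype _)
  have hrange : LinearMap.range (K.subtype.baseChange S) = LinearMap.ker (π.baseChange S) := by
    have hex : Function.Exact (LinearMap.lTensor S K.subtype) (LinearMap.lTensor S π) := by
      apply lTensor_exact S _ hπ
      exact LinearMap.exact_subtype_ker_map π
    ext x
    have h1' : x ∈ LinearMap.range (K.subtype.baseChange S) ↔
        x ∈ LinearMap.range (LinearMap.lTensor S K.subtype) := by
      constructor <;> rintro ⟨y, rfl⟩ <;> exact ⟨y, by
        simp [LinearMap.baseChange_eq_ltensor]⟩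
    have h2' : x ∈ LinearMap.ker (π.baseChange S) ↔
        x ∈ LinearMap.ker (LinearMap.lTensor S π) := by
      simp [LinearMap.mem_ker, LinearMap.baseChange_eq_ltensor]
    rw [h1', h2', LinearMap.exact_iff.mp hex]
  haveI : Module.Finite S (S ⊗[R] K) := by
    have e : (S ⊗[R] K) ≃ₗ[S] LinearMap.ker (π.baseChange S) :=
      (LinearEquiv.ofInjective (K.subtype.baseChange S) hKsub).trans
        (LinearEquiv.ofEq _ _ hrange)
    exact Module.Finite.equiv e.symm
  haveI : Module.Finite R K := ffd_finite R S K
  have hKfg : K.FG := by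
    exact Module.Finite.iff_fg.mp inferInstance
  haveI hfp : Module.FinitePresentation R M :=
    Module.finitePresentation_of_surjective π hπ hKfg
  refine ⟨hfin, ?_⟩
  rw [← Module.freeLocus_eq_univ_iff]
  exact Module.freeLocus_eq_univ
end

section
/- Let R be a Noetherian local ring and M a finitely generated R-module. If M ⊗_R R^h has finite projective dimension over the Henselization R^h, then M has finite projective dimension over R, and conversely. -/
universe u

open IsLocalRing

/-- `ProjDimLE R n M` : `M` admits a resolution of length at most `n`
by finitely generated projective `R`-modules. -/
def ProjDimLE (R : Type u) [CommRing R] :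
    ℕ → ∀ (M : Type u) [AddCommGroup M] [Module R M], Prop
  | 0, M, _, _ => Module.Finite R M ∧ Module.Projective R M
  | n + 1, M, _, _ => ∃ (k : ℕ) (f : (Fin k → R) →ₗ[R] M),
      Function.Surjective f ∧ ProjDimLE R n ↥(LinearMap.ker f)

set_option synthInstance.maxHeartbeats 400000
set_option maxHeartbeats 1000000

section Plumbing_aux

section Plumbing

variable {R : Type u} [CommRing R]
variable {M N P : Type u} [AddCommGroup M] [Module R M] [AddCommGroup N] [Module R N]
  [AddCommGroup P] [Module R P]

theorem ProjDimLE.finite {n : ℕ} (h : ProjDimLE R n M) : Module.Finite R M := by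
  cases n with
  | zero => exact h.1
  | succ n =>
    obtain ⟨k, f, hs, -⟩ := h
    exact Module.Finite.of_surjective f hs

theorem ProjDimLE.of_equiv {n : ℕ} (e : M ≃ₗ[R] N) (h : ProjDimLE R n M) :
    ProjDimLE R n N := by
  cases n with
  | zero =>
    obtain ⟨h1, h2⟩ := h
    haveI := h1; haveI := h2
    exact ⟨Module.Finite.equiv e, Module.Projective.of_equiv e⟩
  | succ n =>
    obtain ⟨k, f, hs, hk⟩ := h
    refine ⟨k, (e : M →ₗ[R] N) ∘ₗ f, e.surjective.comp hs, ?_⟩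
    rwa [LinearMap.ker_comp_of_ker_eq_bot _ e.ker]

/-- kernel of a composition with an equivalence on the source. -/
noncomputable def kerCompEquiv (f : M →ₗ[R] P) (e : N ≃ₗ[R] M) :
    ↥(LinearMap.ker (f ∘ₗ (e : N →ₗ[R] M))) ≃ₗ[R] ↥(LinearMap.ker f) :=
  (e.submoduleMap (LinearMap.ker (f ∘ₗ (e : N →ₗ[R] M)))).trans (LinearEquiv.ofEq _ _ (by
    ext y
    simp only [Submodule.mem_map, LinearMap.mem_ker, LinearMap.comp_apply,
      LinearEquiv.coe_coe]
    constructor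
    · rintro ⟨x, hx, rfl⟩; exact hx
    · intro hy; exact ⟨e.symm y, by simpa using hy, by simp⟩))

theorem ProjDimLE.prodFree {n : ℕ} (m : ℕ) (h : ProjDimLE R n M) :
    ProjDimLE R n (M × (Fin m → R)) := by
  cases n with
  | zero =>
    obtain ⟨h1, h2⟩ := h
    exact by haveI := h1; haveI := h2; exact ⟨Module.Finite.prod, inferInstance⟩
  | succ n =>
    obtain ⟨k, f, hs, hk⟩ := h
    let e : (Fin (k + m) → R) ≃ₗ[R] (Fin k → R) × (Fin m → R) :=
      (LinearEquiv.funCongrLeft R R finSumFinEquiv).trans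
        (LinearEquiv.sumArrowLequivProdArrow _ _ R R)
    let F := (f.prodMap (LinearMap.id : (Fin m → R) →ₗ[R] (Fin m → R))) ∘ₗ
      (e : (Fin (k + m) → R) →ₗ[R] (Fin k → R) × (Fin m → R))
    have hFs : Function.Surjective F := by
      have : Function.Surjective (f.prodMap (LinearMap.id :
          (Fin m → R) →ₗ[R] (Fin m → R))) := by
        intro ⟨a, b⟩
        obtain ⟨x, hx⟩ := hs a
        exact ⟨(x, b), by simp [hx]⟩
      exact this.comp e.surjective
    refine ⟨k + m, F, hFs, ?_⟩
    have e1 : ↥(LinearMap.ker F) ≃ₗ[R]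
        ↥(LinearMap.ker (f.prodMap (LinearMap.id : (Fin m → R) →ₗ[R] (Fin m → R)))) :=
      kerCompEquiv _ e
    have hker : LinearMap.ker (f.prodMap (LinearMap.id : (Fin m → R) →ₗ[R] (Fin m → R)))
        = (LinearMap.ker f).prod ⊥ := by
      rw [LinearMap.ker_prodMap, LinearMap.ker_id]
    have e2 : ↥((LinearMap.ker f).prod (⊥ : Submodule R (Fin m → R))) ≃ₗ[R]
        ↥(LinearMap.ker f) := by
      refine LinearEquiv.ofLinear
        ((LinearMap.fst R _ _ ∘ₗ ((LinearMap.ker f).prod ⊥).subtype).codRestrict _ ?_)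
        (((LinearMap.inl R _ _) ∘ₗ (LinearMap.ker f).subtype).codRestrict _ ?_) ?_ ?_
      · rintro ⟨⟨a, b⟩, ha, hb⟩; exact ha
      · rintro ⟨a, ha⟩; exact ⟨ha, rfl⟩
      · ext x; simp
      · refine LinearMap.ext fun x => ?_
        obtain ⟨⟨a, b⟩, ha, hb⟩ := x
        have hb0 : b = 0 := (Submodule.mem_bot R).mp hb
        subst hb0
        apply Subtype.ext
        simp
    have h3 : ProjDimLE R n
        ↥(LinearMap.ker (f.prodMap (LinearMap.id : (Fin m → R) →ₗ[R] (Fin m → R)))) := by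
      rw [hker]; exact hk.of_equiv e2.symm
    exact h3.of_equiv e1.symm

theorem ProjDimLE.of_prodFree {n : ℕ} (m : ℕ)
    (h : ProjDimLE R n (M × (Fin m → R))) : ProjDimLE R n M := by
  cases n with
  | zero =>
    obtain ⟨h1, h2⟩ := h
    haveI := h1; haveI := h2
    refine ⟨Module.Finite.of_surjective (LinearMap.fst R M (Fin m → R))
      Prod.fst_surjective, ?_⟩
    exact Module.Projective.of_split (LinearMap.inl R M (Fin m → R))
      (LinearMap.fst R M (Fin m → R)) (by ext x <;> simp)
  | succ n =>
    obtain ⟨k, f, hs, hk⟩ := h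
    let g : (Fin k → R) →ₗ[R] M := LinearMap.fst R M (Fin m → R) ∘ₗ f
    have hgs : Function.Surjective g := by
      intro y
      obtain ⟨x, hx⟩ := hs (y, 0)
      exact ⟨x, by simp [g, hx]⟩
    obtain ⟨t, ht⟩ := Module.projective_lifting_property f (LinearMap.inr R M (Fin m → R)) hs
    have htv : ∀ v, f (t v) = (0, v) := fun v => DFunLike.congr_fun ht v
    refine ⟨k, g, hgs, ?_⟩
    have hfst : ∀ x : ↥(LinearMap.ker g), (f x.1).1 = 0 := fun x => x.2
    let fwd : (↥(LinearMap.ker f) × (Fin m → R)) →ₗ[R] ↥(LinearMap.ker g) :=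
      LinearMap.codRestrict (LinearMap.ker g)
        (((LinearMap.ker f).subtype ∘ₗ LinearMap.fst R _ _) + (t ∘ₗ LinearMap.snd R _ _))
        (by
          rintro ⟨⟨y, hy⟩, v⟩
          have hy' : f y = 0 := hy
          simp [g, LinearMap.mem_ker, hy', htv])
    let w : ↥(LinearMap.ker g) →ₗ[R] (Fin k → R) :=
      (LinearMap.ker g).subtype -
        t ∘ₗ (LinearMap.snd R M (Fin m → R) ∘ₗ (f ∘ₗ (LinearMap.ker g).subtype))
    have hw : ∀ x, w x ∈ LinearMap.ker f := by
      intro x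
      have : f (x : Fin k → R) = ((f x.1).1, (f x.1).2) := rfl
      simp only [LinearMap.mem_ker, w, LinearMap.sub_apply, map_sub, LinearMap.comp_apply,
        Submodule.coe_subtype, htv]
      rw [this, hfst x]
      simp [Prod.ext_iff]
    let bwd : ↥(LinearMap.ker g) →ₗ[R] (↥(LinearMap.ker f) × (Fin m → R)) :=
      (LinearMap.codRestrict (LinearMap.ker f) w hw).prod
        (LinearMap.snd R M (Fin m → R) ∘ₗ (f ∘ₗ (LinearMap.ker g).subtype))
    have h1 : fwd ∘ₗ bwd = LinearMap.id := by
      refine LinearMap.ext fun x => ?_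
      apply Subtype.ext
      simp [fwd, bwd, w]
    have h2 : bwd ∘ₗ fwd = LinearMap.id := by
      refine LinearMap.ext fun x => ?_
      obtain ⟨⟨y, hy⟩, v⟩ := x
      have hy' : f y = 0 := hy
      have hsnd : (f (y + t v)).2 = v := by simp [hy', htv]
      refine Prod.ext (Subtype.ext ?_) ?_
      · simp [fwd, bwd, w, hy', htv]
      · simp [fwd, bwd, hy', htv]
    exact (hk.prodFree m).of_equiv (LinearEquiv.ofLinear fwd bwd h1 h2)

theorem schanuel_aux {A B : Type u} [AddCommGroup A] [Module R A] [AddCommGroup B] [Module R B]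
    (f : A →ₗ[R] M) (g : B →ₗ[R] M) (t : B →ₗ[R] A) (ht : f ∘ₗ t = g) :
    Nonempty ((↥(LinearMap.ker f) × B) ≃ₗ[R]
      ↥(LinearMap.ker (f ∘ₗ LinearMap.fst R A B - g ∘ₗ LinearMap.snd R A B))) := by
  set h0 := f ∘ₗ LinearMap.fst R A B - g ∘ₗ LinearMap.snd R A B with hh0
  have htv : ∀ v, f (t v) = g v := fun v => DFunLike.congr_fun ht v
  have hmem : ∀ x : A × B, x ∈ LinearMap.ker h0 ↔ f x.1 = g x.2 := by
    intro x
    simp [h0, LinearMap.mem_ker, sub_eq_zero]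
  let fwd : (↥(LinearMap.ker f) × B) →ₗ[R] ↥(LinearMap.ker h0) :=
    LinearMap.codRestrict _
      ((((LinearMap.ker f).subtype ∘ₗ LinearMap.fst R _ _) + (t ∘ₗ LinearMap.snd R _ _)).prod
        (LinearMap.snd R _ _))
      (by
        rintro ⟨⟨y, hy⟩, v⟩
        have hy' : f y = 0 := hy
        rw [hmem]
        simp [hy', htv])
  let w : ↥(LinearMap.ker h0) →ₗ[R] A :=
    (LinearMap.fst R A B - t ∘ₗ LinearMap.snd R A B) ∘ₗ (LinearMap.ker h0).subtype
  have hw : ∀ x, w x ∈ LinearMap.ker f := by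
    rintro ⟨⟨a, b⟩, hab⟩
    rw [hmem] at hab
    simp [w, LinearMap.mem_ker, htv, hab]
  let bwd : ↥(LinearMap.ker h0) →ₗ[R] (↥(LinearMap.ker f) × B) :=
    (LinearMap.codRestrict _ w hw).prod
      ((LinearMap.snd R A B) ∘ₗ (LinearMap.ker h0).subtype)
  have h1 : fwd ∘ₗ bwd = LinearMap.id := by
    refine LinearMap.ext fun x => ?_
    apply Subtype.ext
    obtain ⟨⟨a, b⟩, hab⟩ := x
    refine Prod.ext ?_ ?_ <;> simp [fwd, bwd, w]
  have h2 : bwd ∘ₗ fwd = LinearMap.id := by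
    refine LinearMap.ext fun x => ?_
    obtain ⟨⟨y, hy⟩, v⟩ := x
    refine Prod.ext (Subtype.ext ?_) ?_ <;> simp [fwd, bwd, w]
  exact ⟨LinearEquiv.ofLinear fwd bwd h1 h2⟩

theorem ProjDimLE.ker_swap {n k j : ℕ} (f : (Fin k → R) →ₗ[R] M) (g : (Fin j → R) →ₗ[R] M)
    (hf : Function.Surjective f) (hg : Function.Surjective g)
    (h : ProjDimLE R n ↥(LinearMap.ker f)) : ProjDimLE R n ↥(LinearMap.ker g) := by
  obtain ⟨t, ht⟩ := Module.projective_lifting_property f g hf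
  obtain ⟨u, hu⟩ := Module.projective_lifting_property g f hg
  obtain ⟨e1⟩ := schanuel_aux f g t ht
  obtain ⟨e2⟩ := schanuel_aux g f u hu
  set h1 := f ∘ₗ LinearMap.fst R (Fin k → R) (Fin j → R) -
    g ∘ₗ LinearMap.snd R (Fin k → R) (Fin j → R) with hh1
  set h2 := g ∘ₗ LinearMap.fst R (Fin j → R) (Fin k → R) -
    f ∘ₗ LinearMap.snd R (Fin j → R) (Fin k → R) with hh2
  have hkereq : LinearMap.ker h1 = LinearMap.ker (h2 ∘ₗ
      ((LinearEquiv.prodComm R (Fin k → R) (Fin j → R)) :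
        ((Fin k → R) × (Fin j → R)) →ₗ[R] ((Fin j → R) × (Fin k → R)))) := by
    ext ⟨a, b⟩
    simp only [h1, h2, LinearMap.mem_ker, LinearMap.sub_apply, LinearMap.comp_apply,
      LinearMap.fst_apply, LinearMap.snd_apply, LinearEquiv.coe_coe, LinearEquiv.prodComm_apply,
      Prod.fst_swap, Prod.snd_swap, sub_eq_zero]
    exact eq_comm
  have E3 : ↥(LinearMap.ker h1) ≃ₗ[R] ↥(LinearMap.ker h2) :=
    (LinearEquiv.ofEq _ _ hkereq).trans
      (kerCompEquiv h2 (LinearEquiv.prodComm R (Fin k → R) (Fin j → R)))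
  exact ProjDimLE.of_prodFree k ((((h.prodFree j).of_equiv e1).of_equiv E3).of_equiv e2.symm)

end Plumbing

section BaseChange

open TensorProduct

variable {R S : Type u} [CommRing R] [CommRing S] [Algebra R S]
variable {A B : Type u} [AddCommGroup A] [Module R A] [AddCommGroup B] [Module R B]

/-- `(Fin k → S) ≃ₗ[S] S ⊗[R] (Fin k → R)`. -/
noncomputable def freeBaseChangeEquiv (k : ℕ) : (Fin k → S) ≃ₗ[S] S ⊗[R] (Fin k → R) :=
  ((Algebra.TensorProduct.basis S (Pi.basisFun R (Fin k))).equivFun).symm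

theorem baseChange_surjective' (g : A →ₗ[R] B) (hg : Function.Surjective g) :
    Function.Surjective (g.baseChange S) := by
  have h : Function.Surjective (g.lTensor S) := LinearMap.lTensor_surjective S hg
  intro x
  obtain ⟨y, hy⟩ := h x
  exact ⟨y, by rw [LinearMap.baseChange_eq_ltensor]; exact hy⟩

theorem baseChange_apply_eq_lTensor (g : A →ₗ[R] B) (x : S ⊗[R] A) :
    g.baseChange S x = g.lTensor S x := by
  rw [LinearMap.baseChange_eq_ltensor]

theorem baseChange_subtype_injective [Module.Flat R S] (p : Submodule R A) :
    Function.Injective (p.subtype.baseChange S) := by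
  have h := Module.Flat.lTensor_preserves_injective_linearMap (M := S)
    p.subtype Subtype.val_injective
  intro x y hxy
  exact h (by rw [← baseChange_apply_eq_lTensor, ← baseChange_apply_eq_lTensor]; exact hxy)

theorem ker_baseChange_eq [Module.Flat R S] (g : A →ₗ[R] B) :
    LinearMap.ker (g.baseChange S) =
      LinearMap.range ((LinearMap.ker g).subtype.baseChange S) := by
  have hex : Function.Exact ((LinearMap.ker g).subtype.lTensor S) (g.lTensor S) :=
    Module.Flat.lTensor_exact S (LinearMap.exact_subtype_ker_map g)
  ext x
  constructor
  · intro hx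
    have hx0 : g.lTensor S x = 0 := by
      rw [← baseChange_apply_eq_lTensor]; exact hx
    obtain ⟨y, hy⟩ := (hex x).mp hx0
    exact ⟨y, by rw [baseChange_apply_eq_lTensor]; exact hy⟩
  · rintro ⟨y, rfl⟩
    show g.baseChange S ((LinearMap.ker g).subtype.baseChange S y) = 0
    rw [baseChange_apply_eq_lTensor, baseChange_apply_eq_lTensor]
    apply (hex _).mpr
    exact ⟨y, rfl⟩

/-- For flat `S`, the kernel of the base change is the base change of the kernel. -/
noncomputable def kerBaseChangeEquiv [Module.Flat R S] (g : A →ₗ[R] B) :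
    ↥(LinearMap.ker (g.baseChange S)) ≃ₗ[S] S ⊗[R] ↥(LinearMap.ker g) :=
  ((LinearEquiv.ofInjective ((LinearMap.ker g).subtype.baseChange S)
    (baseChange_subtype_injective _)).trans
      (LinearEquiv.ofEq _ _ (ker_baseChange_eq g).symm)).symm

end BaseChange

section MinimalPresentation

open TensorProduct

variable {R : Type u} [CommRing R] [IsLocalRing R]

theorem exists_minimal_presentation (M : Type u) [AddCommGroup M] [Module R M]
    [Module.Finite R M] :
    ∃ (m : ℕ) (g : (Fin m → R) →ₗ[R] M), Function.Surjective g ∧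
      LinearMap.ker g ≤ (IsLocalRing.maximalIdeal R) • (⊤ : Submodule R (Fin m → R)) := by
  classical
  set k := IsLocalRing.ResidueField R with hkdef
  let I := Module.Free.ChooseBasisIndex k (k ⊗[R] M)
  let b : Module.Basis I k (k ⊗[R] M) := Module.Free.chooseBasis k (k ⊗[R] M)
  let m := Fintype.card I
  let eI : I ≃ Fin m := Fintype.equivFin I
  let b' : Module.Basis (Fin m) k (k ⊗[R] M) := b.reindex eI
  choose lift hlift using TensorProduct.mk_surjective R M k Ideal.Quotient.mk_surjective
  let c : Fin m → M := fun i => lift (b' i)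
  let g : (Fin m → R) →ₗ[R] M := Fintype.linearCombination R c
  have hgs : Function.Surjective g := by
    rw [← LinearMap.range_eq_top, Fintype.range_linearCombination]
    exact IsLocalRing.span_eq_top_of_tmul_eq_basis (R := R) (f := c) b' fun i => hlift _
  refine ⟨m, g, hgs, ?_⟩
  intro x hx
  have hxi : ∀ i, x i ∈ IsLocalRing.maximalIdeal R := by
    have h0 : (0 : k ⊗[R] M) = ∑ i, (IsLocalRing.residue R (x i)) • b' i := by
      have : g x = 0 := hx
      calc (0 : k ⊗[R] M) = (1 : k) ⊗ₜ[R] (g x) := by rw [this, tmul_zero]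
      _ = (1 : k) ⊗ₜ[R] (∑ i, x i • c i) := by rw [Fintype.linearCombination_apply]
      _ = ∑ i, (1 : k) ⊗ₜ[R] (x i • c i) := tmul_sum 1 _ _
      _ = ∑ i, (IsLocalRing.residue R (x i)) • ((1 : k) ⊗ₜ[R] c i) := by
          refine Finset.sum_congr rfl fun i _ => ?_
          rw [tmul_smul, ← algebraMap_smul k (x i) ((1:k) ⊗ₜ[R] c i)]
          rfl
      _ = ∑ i, (IsLocalRing.residue R (x i)) • b' i := by
          refine Finset.sum_congr rfl fun i _ => ?_
          have hc : (1 : k) ⊗ₜ[R] c i = b' i := hlift (b' i)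
          rw [hc]
    have hli := Fintype.linearIndependent_iff.mp b'.linearIndependent
      (fun i => IsLocalRing.residue R (x i)) h0.symm
    intro i
    exact Ideal.Quotient.eq_zero_iff_mem.mp (hli i)
  rw [pi_eq_sum_univ x]
  refine Submodule.sum_mem _ fun i _ => ?_
  exact Submodule.smul_mem_smul (hxi i) Submodule.mem_top

end MinimalPresentation

section Main

open TensorProduct

variable (R Rh : Type u) [CommRing R] [IsLocalRing R] [IsNoetherianRing R]
  [CommRing Rh] [IsLocalRing Rh] [IsNoetherianRing Rh]
  [Algebra R Rh] [IsLocalHom (algebraMap R Rh)] [Module.FaithfullyFlat R Rh]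

theorem projDimLE_ascent (n : ℕ) :
    ∀ (M : Type u) [AddCommGroup M] [Module R M],
      ProjDimLE R n M → ProjDimLE Rh n (Rh ⊗[R] M) := by
  induction n with
  | zero =>
    intro M _ _ h
    obtain ⟨h1, h2⟩ := h
    haveI := h1; haveI := h2
    exact ⟨inferInstance, inferInstance⟩
  | succ n ih =>
    intro M _ _ h
    obtain ⟨k, f, hs, hk⟩ := h
    let e : (Fin k → Rh) ≃ₗ[Rh] Rh ⊗[R] (Fin k → R) := freeBaseChangeEquiv k
    refine ⟨k, (f.baseChange Rh) ∘ₗ (e : (Fin k → Rh) →ₗ[Rh] Rh ⊗[R] (Fin k → R)),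
      (baseChange_surjective' f hs).comp e.surjective, ?_⟩
    exact (ih _ hk).of_equiv
      ((kerCompEquiv (f.baseChange Rh) e).trans (kerBaseChangeEquiv f)).symm

theorem projDimLE_descent (n : ℕ) :
    ∀ (M : Type u) [AddCommGroup M] [Module R M] [Module.Finite R M],
      ProjDimLE Rh n (Rh ⊗[R] M) → ProjDimLE R n M := by
  induction n with
  | zero =>
    intro M _ _ _ h
    obtain ⟨hfin, hproj⟩ := h
    haveI := hproj
    obtain ⟨m, g, hgs, hker⟩ := exists_minimal_presentation (R := R) M
    set p := g.baseChange Rh with hp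
    have hps : Function.Surjective p := baseChange_surjective' g hgs
    obtain ⟨s, hs⟩ := Module.projective_lifting_property p LinearMap.id hps
    set K := LinearMap.ker p with hK
    have hK1 : K ≤ (IsLocalRing.maximalIdeal Rh) •
        (⊤ : Submodule Rh (Rh ⊗[R] (Fin m → R))) := by
      intro x hx
      rw [hK, hp, ker_baseChange_eq] at hx
      obtain ⟨y, rfl⟩ := hx
      induction y using TensorProduct.induction_on with
      | zero => simp
      | tmul r v =>
        have hv : (v : Fin m → R) ∈ (IsLocalRing.maximalIdeal R) •
            (⊤ : Submodule R (Fin m → R)) := hker v.2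
        have heq : ((LinearMap.ker g).subtype.baseChange Rh) (r ⊗ₜ v)
            = r ⊗ₜ[R] (v : Fin m → R) := by simp
        rw [heq]
        refine Submodule.smul_induction_on hv ?_ ?_
        · intro a ha z _
          have h1 : r ⊗ₜ[R] (a • z) = (algebraMap R Rh a) • (r ⊗ₜ[R] z) := by
            rw [tmul_smul, algebraMap_smul]
          rw [h1]
          refine Submodule.smul_mem_smul ?_ Submodule.mem_top
          rw [IsLocalRing.mem_maximalIdeal] at ha ⊢
          exact fun hu => ha (IsUnit.of_map (algebraMap R Rh) a hu)
        · intro z w hz hw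
          rw [tmul_add]
          exact Submodule.add_mem _ hz hw
      | add z w hz hw =>
        rw [map_add]
        exact Submodule.add_mem _ hz hw
    have hK2 : K ≤ (IsLocalRing.maximalIdeal Rh) • K := by
      set r := (LinearMap.id : Rh ⊗[R] (Fin m → R) →ₗ[Rh] Rh ⊗[R] (Fin m → R)) - s ∘ₗ p
        with hr
      have hrK : ∀ z, r z ∈ K := by
        intro z
        have : p (s (p z)) = p z := DFunLike.congr_fun hs (p z)
        simp only [hK, LinearMap.mem_ker, hr, LinearMap.sub_apply, LinearMap.id_apply,
          LinearMap.comp_apply, map_sub, this, sub_self]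
      intro x hx
      have hxr : r x = x := by
        have hpx : p x = 0 := hx
        simp [hr, hpx]
      have hmem : x ∈ Submodule.map r ((IsLocalRing.maximalIdeal Rh) • ⊤) :=
        hxr ▸ Submodule.mem_map_of_mem (hK1 hx)
      have hle : Submodule.map r ((IsLocalRing.maximalIdeal Rh) • ⊤) ≤
          (IsLocalRing.maximalIdeal Rh) • K := by
        rw [Submodule.map_smul'']
        refine smul_mono_right _ ?_
        rw [Submodule.map_top]
        rintro _ ⟨z, rfl⟩
        exact hrK z
      exact hle hmem
    haveI : Module.Finite Rh (Rh ⊗[R] (Fin m → R)) := inferInstance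
    haveI : IsNoetherian Rh (Rh ⊗[R] (Fin m → R)) :=
      isNoetherian_of_isNoetherianRing_of_finite Rh _
    have hKbot : K = ⊥ :=
      Submodule.eq_bot_of_le_smul_of_le_jacobson_bot (IsLocalRing.maximalIdeal Rh) K
        (IsNoetherian.noetherian K) hK2
        (by rw [IsLocalRing.jacobson_eq_maximalIdeal ⊥ bot_ne_top])
    have hginj : Function.Injective g := by
      rw [← LinearMap.ker_eq_bot]
      haveI : Subsingleton (Rh ⊗[R] ↥(LinearMap.ker g)) := by
        refine subsingleton_of_forall_eq 0 fun y => ?_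
        have h1 : ((LinearMap.ker g).subtype.baseChange Rh) y ∈ K := by
          rw [hK, hp, ker_baseChange_eq]; exact ⟨y, rfl⟩
        rw [hKbot, Submodule.mem_bot] at h1
        have h2 : ((LinearMap.ker g).subtype.baseChange Rh) y
            = ((LinearMap.ker g).subtype.baseChange Rh) 0 := by rw [h1, map_zero]
        exact baseChange_subtype_injective _ h2
      haveI := Module.FaithfullyFlat.lTensor_reflects_triviality R Rh ↥(LinearMap.ker g)
      exact (LinearMap.ker g).eq_bot_of_subsingleton
    exact ⟨inferInstance, Module.Projective.of_equiv (LinearEquiv.ofBijective g ⟨hginj, hgs⟩)⟩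
  | succ n ih =>
    intro M _ _ _ h
    obtain ⟨kk, f', hf's, hkf'⟩ := h
    obtain ⟨m, g, hgs, -⟩ := exists_minimal_presentation (R := R) M
    let e : (Fin m → Rh) ≃ₗ[Rh] Rh ⊗[R] (Fin m → R) := freeBaseChangeEquiv m
    let G : (Fin m → Rh) →ₗ[Rh] Rh ⊗[R] M :=
      (g.baseChange Rh) ∘ₗ (e : (Fin m → Rh) →ₗ[Rh] Rh ⊗[R] (Fin m → R))
    have hGs : Function.Surjective G := (baseChange_surjective' g hgs).comp e.surjective
    have h1 : ProjDimLE Rh n ↥(LinearMap.ker G) := ProjDimLE.ker_swap f' G hf's hGs hkf'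
    have h2 : ProjDimLE Rh n (Rh ⊗[R] ↥(LinearMap.ker g)) :=
      h1.of_equiv ((kerCompEquiv (g.baseChange Rh) e).trans (kerBaseChangeEquiv g))
    haveI : Module.Finite R ↥(LinearMap.ker g) :=
      Module.Finite.iff_fg.mpr (IsNoetherian.noetherian _)
    exact ⟨m, g, hgs, ih _ h2⟩

end Main

end Plumbing_aux

/-- A local ring is regular if the minimal number of generators of the maximal ideal
(the dimension of the cotangent space over the residue field) equals the Krull dimension. -/
def IsRegularLocal (R : Type u) [CommRing R] [IsLocalRing R] : Prop :=
  (Module.finrank (ResidueField R) (CotangentSpace R) : WithBot ℕ∞) = ringKrullDim R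

open TensorProduct in
/-- for a Noetherian local ring `R` and its Henselization `R^h`
(a Henselian Noetherian local ring which is a faithfully flat local `R`-algebra),
a finitely generated `R`-module `M` has finite projective dimension over `R` iff
`M ⊗[R] R^h` has finite projective dimension over `R^h`. -/
theorem stmt_6 (R Rh : Type u) [CommRing R] [IsLocalRing R] [IsNoetherianRing R]
    [CommRing Rh] [IsLocalRing Rh] [IsNoetherianRing Rh] [HenselianLocalRing Rh]
    [Algebra R Rh] [IsLocalHom (algebraMap R Rh)] [Module.FaithfullyFlat R Rh]
    (M : Type u) [AddCommGroup M] [Module R M] [Module.Finite R M] :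
    (∃ n : ℕ, ProjDimLE R n M) ↔ ∃ n : ℕ, ProjDimLE Rh n (Rh ⊗[R] M) := by
  constructor
  · rintro ⟨n, h⟩
    exact ⟨n, projDimLE_ascent R Rh n M h⟩
  · rintro ⟨n, h⟩
    exact ⟨n, projDimLE_descent R Rh n M h⟩
end
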